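/- (Elastic-net τ-path pruning) Let x_ℓ, x_{ℓ′} ∈ {0,1}ⁿ satisfy x_{iℓ′} ≤ x_{iℓ} for all i, let w, v, b ∈ ℝⁿ, let ρ̄_k, θ_k, η̄_k ∈ ℝ, and let Δ* ≥ 0. For u ∈ {w, v, b} define b_{j,u} := max( Σ_{i : u_i > 0} |u_i| x_{ij}, Σ_{i : u_i < 0} |u_i| x_{ij} ), and define ρ_j = x_jᵀ w, η_j = x_jᵀ v, θ_j = x_jᵀ b. If b_{ℓ,w} + Δ* b_{ℓ,b} + Δ* b_{ℓ,v} < |ρ̄_k| − Δ*|θ_k| − Δ*|η̄_k|, then for every Δ with 0 ≤ Δ ≤ Δ*, |ρ_{ℓ′} + Δ θ_{ℓ′} − Δ η_{ℓ′}| < |ρ̄_k + Δ θ_k − Δ η̄_k|; in particular the elastic-net inclusion equation |ρ_{ℓ′} + Δ θ_{ℓ′} − Δ η_{ℓ′}| = |ρ̄_k + Δ θ_k − Δ η̄_k| has no solution Δ ∈ [0, Δ*], so the sub-tree rooted at ℓ can be pruned. -/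
import Mathlib


open Matrix

open Finset in
/-- The bound b_{j,u} = max(Σ_{u_i>0}|u_i|x_{ij}, Σ_{u_i<0}|u_i|x_{ij}). -/
noncomputable def bndStmt19 {n : ℕ} (x u : Fin n → ℝ) : ℝ :=
  max (∑ i ∈ univ.filter (fun i => 0 < u i), |u i| * x i)
      (∑ i ∈ univ.filter (fun i => u i < 0), |u i| * x i)

open Finset in
lemma bndStmt19_nonneg {n : ℕ} (x u : Fin n → ℝ) (hx : ∀ i, 0 ≤ x i) :
    0 ≤ bndStmt19 x u := by
  refine le_max_of_le_left (Finset.sum_nonneg fun i _ => ?_)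
  exact mul_nonneg (abs_nonneg _) (hx i)

open Finset in
lemma abs_dot_le_bnd {n : ℕ} (x' x u : Fin n → ℝ)
    (h0 : ∀ i, 0 ≤ x' i) (h1 : ∀ i, x' i ≤ x i) :
    |x' ⬝ᵥ u| ≤ bndStmt19 x u := by
  rw [abs_le]
  have split := Finset.sum_filter_add_sum_filter_not Finset.univ
    (fun i => 0 < u i) (fun i => x' i * u i)
  have split' := Finset.sum_filter_add_sum_filter_not Finset.univ
    (fun i => u i < 0) (fun i => x' i * u i)
  constructor
  · -- lower bound
    refine le_trans (neg_le_neg (le_max_right _ _)) ?_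
    have hA : -(∑ i ∈ univ.filter (fun i => u i < 0), |u i| * x i)
        ≤ ∑ i ∈ univ.filter (fun i => u i < 0), x' i * u i := by
      rw [← Finset.sum_neg_distrib]
      refine Finset.sum_le_sum fun i hi => ?_
      have hu : u i < 0 := (Finset.mem_filter.mp hi).2
      have : |u i| = -u i := abs_of_neg hu
      nlinarith [h0 i, h1 i]
    have hB : 0 ≤ ∑ i ∈ univ.filter (fun i => ¬ u i < 0), x' i * u i := by
      refine Finset.sum_nonneg fun i hi => ?_
      have hu : ¬ u i < 0 := (Finset.mem_filter.mp hi).2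
      exact mul_nonneg (h0 i) (not_lt.mp hu)
    unfold dotProduct
    linarith [split']
  · -- upper bound
    refine le_trans ?_ (le_max_left _ _)
    have hA : ∑ i ∈ univ.filter (fun i => 0 < u i), x' i * u i
        ≤ ∑ i ∈ univ.filter (fun i => 0 < u i), |u i| * x i := by
      refine Finset.sum_le_sum fun i hi => ?_
      have hu : 0 < u i := (Finset.mem_filter.mp hi).2
      have : |u i| = u i := abs_of_pos hu
      nlinarith [h0 i, h1 i]
    have hB : ∑ i ∈ univ.filter (fun i => ¬ 0 < u i), x' i * u i ≤ 0 := by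
      refine Finset.sum_nonpos fun i hi => ?_
      have hu : ¬ 0 < u i := (Finset.mem_filter.mp hi).2
      exact mul_nonpos_of_nonneg_of_nonpos (h0 i) (not_lt.mp hu)
    unfold dotProduct
    linarith [split]

/-- Elastic-net τ-path pruning: the pruning condition at node ℓ (with ridge-corrected
active-feature quantities ρ̄_k, θ_k, η̄_k) ensures that no descendant ℓ′ can satisfy the
elastic-net inclusion equation at any step Δ ∈ [0, Δ*], so the sub-tree can be pruned. -/
theorem elastic_net_general_pruning_tau_path
    (n : ℕ) (xl xl' : Fin n → ℝ)
    (hbl : ∀ i, xl i = 0 ∨ xl i = 1) (hbl' : ∀ i, xl' i = 0 ∨ xl' i = 1)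
    (hmono : ∀ i, xl' i ≤ xl i)
    (w v b : Fin n → ℝ) (ρbark θk ηbark : ℝ) (Δstar : ℝ) (hΔ : 0 ≤ Δstar)
    (h : bndStmt19 xl w + Δstar * bndStmt19 xl b + Δstar * bndStmt19 xl v
        < |ρbark| - Δstar * |θk| - Δstar * |ηbark|) :
    ∀ Δ : ℝ, 0 ≤ Δ → Δ ≤ Δstar →
      |xl' ⬝ᵥ w + Δ * (xl' ⬝ᵥ b) - Δ * (xl' ⬝ᵥ v)|
        < |ρbark + Δ * θk - Δ * ηbark| := by
  intro Δ hΔ0 hΔle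
  have h0 : ∀ i, 0 ≤ xl' i := fun i => by rcases hbl' i with h' | h' <;> rw [h'] <;> norm_num
  have hx0 : ∀ i, 0 ≤ xl i := fun i => by rcases hbl i with h' | h' <;> rw [h'] <;> norm_num
  have hw := abs_dot_le_bnd xl' xl w h0 hmono
  have hb := abs_dot_le_bnd xl' xl b h0 hmono
  have hv := abs_dot_le_bnd xl' xl v h0 hmono
  have hbn : 0 ≤ bndStmt19 xl b := bndStmt19_nonneg xl b hx0
  have hvn : 0 ≤ bndStmt19 xl v := bndStmt19_nonneg xl v hx0
  -- LHS upper bound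
  have hL : |xl' ⬝ᵥ w + Δ * (xl' ⬝ᵥ b) - Δ * (xl' ⬝ᵥ v)|
      ≤ bndStmt19 xl w + Δstar * bndStmt19 xl b + Δstar * bndStmt19 xl v := by
    have t1 : |xl' ⬝ᵥ w + Δ * (xl' ⬝ᵥ b) - Δ * (xl' ⬝ᵥ v)|
        ≤ |xl' ⬝ᵥ w| + |Δ * (xl' ⬝ᵥ b)| + |Δ * (xl' ⬝ᵥ v)| := by
      calc |xl' ⬝ᵥ w + Δ * (xl' ⬝ᵥ b) - Δ * (xl' ⬝ᵥ v)|
          ≤ |xl' ⬝ᵥ w + Δ * (xl' ⬝ᵥ b)| + |Δ * (xl' ⬝ᵥ v)| := abs_sub _ _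
        _ ≤ |xl' ⬝ᵥ w| + |Δ * (xl' ⬝ᵥ b)| + |Δ * (xl' ⬝ᵥ v)| := by
            have := abs_add_le (xl' ⬝ᵥ w) (Δ * (xl' ⬝ᵥ b)); linarith
    have e1 : |Δ * (xl' ⬝ᵥ b)| = Δ * |xl' ⬝ᵥ b| := by
      rw [abs_mul, abs_of_nonneg hΔ0]
    have e2 : |Δ * (xl' ⬝ᵥ v)| = Δ * |xl' ⬝ᵥ v| := by
      rw [abs_mul, abs_of_nonneg hΔ0]
    have t2 : Δ * |xl' ⬝ᵥ b| ≤ Δstar * bndStmt19 xl b := by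
      have := mul_le_mul hΔle hb (abs_nonneg _) hΔ; linarith
    have t3 : Δ * |xl' ⬝ᵥ v| ≤ Δstar * bndStmt19 xl v := by
      have := mul_le_mul hΔle hv (abs_nonneg _) hΔ; linarith
    rw [e1, e2] at t1
    linarith
  -- RHS lower bound
  have hR : |ρbark| - Δstar * |θk| - Δstar * |ηbark|
      ≤ |ρbark + Δ * θk - Δ * ηbark| := by
    have t1 : |ρbark| ≤ |ρbark + Δ * θk - Δ * ηbark| + |Δ * θk| + |Δ * ηbark| := by
      have e : ρbark = (ρbark + Δ * θk - Δ * ηbark) - Δ * θk + Δ * ηbark := by ring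
      calc |ρbark| = |(ρbark + Δ * θk - Δ * ηbark) - Δ * θk + Δ * ηbark| := by rw [← e]
        _ ≤ |(ρbark + Δ * θk - Δ * ηbark) - Δ * θk| + |Δ * ηbark| := abs_add_le _ _
        _ ≤ |ρbark + Δ * θk - Δ * ηbark| + |Δ * θk| + |Δ * ηbark| := by
            have := abs_sub (ρbark + Δ * θk - Δ * ηbark) (Δ * θk); linarith
    have e1 : |Δ * θk| = Δ * |θk| := by rw [abs_mul, abs_of_nonneg hΔ0]
    have e2 : |Δ * ηbark| = Δ * |ηbark| := by rw [abs_mul, abs_of_nonneg hΔ0]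
    have t2 : Δ * |θk| ≤ Δstar * |θk| := mul_le_mul_of_nonneg_right hΔle (abs_nonneg _)
    have t3 : Δ * |ηbark| ≤ Δstar * |ηbark| := mul_le_mul_of_nonneg_right hΔle (abs_nonneg _)
    rw [e1, e2] at t1
    linarith
  linarith
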